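/- Let {b_k} be a binary sequence (each b_k ∈ {0,1}). Define polynomial sequences s_k, t_k in ℤ[z] by s_{−1} = 1, t_{−1} = 0, s_k = (1 − b_k)·s_{k−1} + z^{2^k}·[b_k·(s_{k−1} − t_{k−1}) + t_{k−1}], and t_k = b_k·s_{k−1} + t_{k−1}. Then for all m ≥ 0 and all n ≥ 0, a(2^{m+1}·n + Σ_{j=0}^{m} 2^j b_j ; z) = s_m(z)·a(n; z^{2^{m+1}}) + t_m(z)·a(n+1; z^{2^{m+1}}). -/

import Mathlib

/-!
Peeling off the lowest binary digit `β` of `2n + β` with the recurrences of `a` turns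
`p · a(2n+β; w) + q · a(2n+β+1; w)` into `p' · a(n; w²) + q' · a(n+1; w²)`, where `(p', q')` is
obtained from `(p, q)` exactly by the recurrence defining `(s_k, t_k)` with `w = z^{2^k}`.
Iterating this `m + 1` times, starting from `(s_{-1}, t_{-1}) = (1, 0)`, gives the theorem.
-/

open Polynomial

/-- The Stern polynomials: a(0;z)=0, a(1;z)=1, a(2n;z)=a(n;z^2),
    a(2n+1;z)=z*a(n;z^2)+a(n+1;z^2). -/
noncomputable def stern : ℕ → Polynomial ℤ
  | 0 => 0
  | 1 => 1
  | (n+2) =>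
    if _h : n % 2 = 0 then (stern (n/2+1)).comp (X^2)
    else X * (stern (n/2+1)).comp (X^2) + (stern (n/2+2)).comp (X^2)
  decreasing_by all_goals omega

open Finset

lemma stern_two_mul (n : ℕ) : stern (2 * n) = (stern n).comp (X ^ 2) := by
  cases n with
  | zero => simp [stern]
  | succ k =>
    rw [show 2 * (k + 1) = 2 * k + 2 by ring, stern, dif_pos (by omega)]
    congr 2
    omega

lemma stern_two_mul_add_one (n : ℕ) :
    stern (2 * n + 1) = X * (stern n).comp (X ^ 2) + (stern (n + 1)).comp (X ^ 2) := by
  cases n with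
  | zero => simp [stern]
  | succ k =>
    rw [show 2 * (k + 1) + 1 = 2 * k + 1 + 2 by ring, stern, dif_neg (by omega),
      show (2 * k + 1) / 2 = k by omega]

lemma stern_two_mul_comp (n : ℕ) (w : ℤ[X]) :
    (stern (2 * n)).comp w = (stern n).comp (w ^ 2) := by
  rw [stern_two_mul, comp_assoc, pow_comp, X_comp]

lemma stern_two_mul_add_one_comp (n : ℕ) (w : ℤ[X]) :
    (stern (2 * n + 1)).comp w = w * (stern n).comp (w ^ 2) + (stern (n + 1)).comp (w ^ 2) := by
  rw [stern_two_mul_add_one, add_comp, mul_comp, X_comp, comp_assoc, comp_assoc, pow_comp, X_comp]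

lemma stern_comp_two_mul_add_bit (p q w : ℤ[X]) (n β : ℕ) (hβ : β = 0 ∨ β = 1) :
    p * (stern (2 * n + β)).comp w + q * (stern (2 * n + β + 1)).comp w =
      (C (1 - (β : ℤ)) * p + w * (C (β : ℤ) * (p - q) + q)) * (stern n).comp (w ^ 2) +
        (C (β : ℤ) * p + q) * (stern (n + 1)).comp (w ^ 2) := by
  rcases hβ with rfl | rfl
  · rw [add_zero, stern_two_mul_comp, stern_two_mul_add_one_comp]
    simp only [Nat.cast_zero, sub_zero, map_one, map_zero]
    ring
  · rw [show 2 * n + 1 + 1 = 2 * (n + 1) by ring, stern_two_mul_add_one_comp, stern_two_mul_comp]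
    simp only [Nat.cast_one, sub_self, map_one, map_zero]
    ring

theorem stern_smtm
    (b : ℕ → ℕ) (hb : ∀ k, b k = 0 ∨ b k = 1)
    (s t : ℕ → Polynomial ℤ)
    (hs0 : s 0 = 1) (ht0 : t 0 = 0)
    (hs : ∀ k, s (k+1) = C (1 - (b k : ℤ)) * s k + X^(2^k) * (C (b k : ℤ) * (s k - t k) + t k))
    (ht : ∀ k, t (k+1) = C (b k : ℤ) * s k + t k) :
    ∀ m n : ℕ,
      stern (2^(m+1) * n + ∑ j ∈ Finset.range (m+1), 2^j * b j) =
        s (m+1) * (stern n).comp (X^(2^(m+1))) +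
        t (m+1) * (stern (n+1)).comp (X^(2^(m+1))) := by
  suffices key : ∀ m n, stern (2 ^ m * n + ∑ j ∈ range m, 2 ^ j * b j) =
      s m * (stern n).comp (X ^ 2 ^ m) + t m * (stern (n + 1)).comp (X ^ 2 ^ m) from
    fun m n => key (m + 1) n
  intro m
  induction m with
  | zero => simp [hs0, ht0]
  | succ m ih =>
    intro n
    have lowest_digit : 2 ^ (m + 1) * n + ∑ j ∈ range (m + 1), 2 ^ j * b j =
        2 ^ m * (2 * n + b m) + ∑ j ∈ range m, 2 ^ j * b j := by
      rw [sum_range_succ]; ring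
    rw [lowest_digit, ih, stern_comp_two_mul_add_bit _ _ _ _ _ (hb m), hs, ht, ← pow_mul,
      ← pow_succ]
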